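/- Let F : ℝⁿ → ℝᵐ be continuously differentiable. Then the map x ↦ d(x) is continuous on ℝⁿ, where d(x) is the steepest descent direction at x. -/

import Mathlib

open scoped RealInnerProductSpace

/-- `φ_g(d) = max_{1 ≤ i ≤ m} ⟨g_i, d⟩ + ‖d‖²/2`. -/
noncomputable def phi {n m : ℕ} (g : Fin m → EuclideanSpace ℝ (Fin n))
    (d : EuclideanSpace ℝ (Fin n)) : ℝ :=
  (⨆ i, ⟪g i, d⟫) + ‖d‖ ^ 2 / 2

/-!
A minimizer `d` of `phi g` satisfies `phi g d + ‖d - e‖² / 4 ≤ phi g e`, by `1`-strong convexity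
applied at the midpoint of `d` and `e`. Since `phi g` moves by at most `‖g - g'‖ ‖e‖` when `g` is
replaced by `g'`, adding this growth bound at the minimizers of `phi g` and `phi g'` gives
`‖d - d'‖² ≤ 4 ‖g - g'‖ (‖g‖ + ‖g'‖)`: the steepest descent direction depends continuously on the
gradients, which depend continuously on `x`.
-/

section

variable {n m : ℕ} (g g' : Fin m → EuclideanSpace ℝ (Fin n))

lemma le_iSup_inner (e : EuclideanSpace ℝ (Fin n)) (i : Fin m) : ⟪g i, e⟫ ≤ ⨆ j, ⟪g j, e⟫ :=
  le_ciSup (f := fun j => ⟪g j, e⟫) (Set.finite_range _).bddAbove i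

lemma iSup_inner_midpoint_le (d d' : EuclideanSpace ℝ (Fin n)) :
    ⨆ i, ⟪g i, (2⁻¹ : ℝ) • (d + d')⟫ ≤ ((⨆ i, ⟪g i, d⟫) + ⨆ i, ⟪g i, d'⟫) / 2 := by
  rcases isEmpty_or_nonempty (Fin m) with _ | _
  · simp [Real.iSup_of_isEmpty]
  refine ciSup_le fun i => ?_
  rw [real_inner_smul_right, inner_add_right]
  linarith [le_iSup_inner g d i, le_iSup_inner g d' i]

lemma iSup_inner_le_add_norm_mul (e : EuclideanSpace ℝ (Fin n)) :
    ⨆ i, ⟪g i, e⟫ ≤ (⨆ i, ⟪g' i, e⟫) + ‖g - g'‖ * ‖e‖ := by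
  rcases isEmpty_or_nonempty (Fin m) with _ | _
  · simp [Real.iSup_of_isEmpty]
    positivity
  refine ciSup_le fun i => ?_
  have hdiff : ⟪g i - g' i, e⟫ ≤ ‖g - g'‖ * ‖e‖ :=
    (real_inner_le_norm _ _).trans <|
      mul_le_mul_of_nonneg_right (norm_le_pi_norm (g - g') i) (norm_nonneg e)
  rw [inner_sub_left] at hdiff
  linarith [le_iSup_inner g' e i]

lemma phi_le_add_norm_mul (e : EuclideanSpace ℝ (Fin n)) :
    phi g e ≤ phi g' e + ‖g - g'‖ * ‖e‖ := by
  unfold phi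
  linarith [iSup_inner_le_add_norm_mul g g' e]

@[simp] lemma phi_zero_right : phi g 0 = 0 := by simp [phi]

@[simp] lemma phi_zero_left (d : EuclideanSpace ℝ (Fin n)) :
    phi (0 : Fin m → _) d = ‖d‖ ^ 2 / 2 := by
  simp [phi]

variable {g g'} {d d' : EuclideanSpace ℝ (Fin n)}

lemma phi_add_sq_le_of_minimizer (hd : ∀ e, phi g d ≤ phi g e) (e : EuclideanSpace ℝ (Fin n)) :
    phi g d + ‖d - e‖ ^ 2 / 4 ≤ phi g e := by
  have hmid := hd ((2⁻¹ : ℝ) • (d + e))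
  have hnorm : ‖(2⁻¹ : ℝ) • (d + e)‖ ^ 2 = (2 * ‖d‖ ^ 2 + 2 * ‖e‖ ^ 2 - ‖d - e‖ ^ 2) / 4 := by
    rw [norm_smul, mul_pow, norm_inv, Real.norm_two]
    linarith [parallelogram_law_with_norm ℝ d e]
  unfold phi at hmid ⊢
  linarith [iSup_inner_midpoint_le g d e]

lemma norm_le_of_minimizer (hd : ∀ e, phi g d ≤ phi g e) : ‖d‖ ≤ 2 * ‖g‖ := by
  have h := (phi_le_add_norm_mul 0 g d).trans (add_le_add_left (hd 0) _)
  rw [phi_zero_left, phi_zero_right, zero_sub, norm_neg, zero_add] at h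
  nlinarith [norm_nonneg d, norm_nonneg g]

lemma sq_norm_sub_le_of_minimizer (hd : ∀ e, phi g d ≤ phi g e)
    (hd' : ∀ e, phi g' d' ≤ phi g' e) :
    ‖d - d'‖ ^ 2 ≤ 4 * ‖g - g'‖ * (‖g‖ + ‖g'‖) := by
  have h := phi_add_sq_le_of_minimizer hd d'
  have h' := phi_add_sq_le_of_minimizer hd' d
  rw [norm_sub_rev d'] at h'
  have hphi := phi_le_add_norm_mul g g' d'
  have hphi' := phi_le_add_norm_mul g' g d
  rw [norm_sub_rev g'] at hphi'
  nlinarith [norm_le_of_minimizer hd, norm_le_of_minimizer hd', norm_nonneg (g - g')]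

end

lemma continuous_of_minimizer {X : Type*} [TopologicalSpace X] {n m : ℕ}
    {G : X → Fin m → EuclideanSpace ℝ (Fin n)} (hG : Continuous G)
    {D : X → EuclideanSpace ℝ (Fin n)} (hD : ∀ x e, phi (G x) (D x) ≤ phi (G x) e) :
    Continuous D := by
  refine continuous_iff_continuousAt.2 fun x₀ => ?_
  rw [ContinuousAt, tendsto_iff_norm_sub_tendsto_zero]
  have hbound : Continuous fun x => √(4 * ‖G x - G x₀‖ * (‖G x‖ + ‖G x₀‖)) := by fun_prop
  refine squeeze_zero (fun _ => norm_nonneg _) (fun x => Real.le_sqrt_of_sq_le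
    (sq_norm_sub_le_of_minimizer (hD x) (hD x₀))) ?_
  simpa using hbound.tendsto x₀

theorem stmt_4_general {n m : ℕ} (F : Fin m → EuclideanSpace ℝ (Fin n) → ℝ)
    (hF : ∀ i, ContDiff ℝ 1 (F i))
    (dmap : EuclideanSpace ℝ (Fin n) → EuclideanSpace ℝ (Fin n))
    (hdmap : ∀ x, ∀ d' : EuclideanSpace ℝ (Fin n),
      phi (fun i => gradient (F i) x) (dmap x) ≤ phi (fun i => gradient (F i) x) d') :
    Continuous dmap := by
  refine continuous_of_minimizer (continuous_pi fun i => ?_) hdmap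
  exact (InnerProductSpace.toDual ℝ _).symm.continuous.comp ((hF i).continuous_fderiv one_ne_zero)

theorem stmt_4 {n m : ℕ} (hm : 0 < m) (F : Fin m → EuclideanSpace ℝ (Fin n) → ℝ)
    (hF : ∀ i, ContDiff ℝ 1 (F i))
    (dmap : EuclideanSpace ℝ (Fin n) → EuclideanSpace ℝ (Fin n))
    (hdmap : ∀ x, ∀ d' : EuclideanSpace ℝ (Fin n),
      phi (fun i => gradient (F i) x) (dmap x) ≤ phi (fun i => gradient (F i) x) d') :
    Continuous dmap :=
  stmt_4_general F hF dmap hdmap
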